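/- arXiv:2506.13749 — 7 statements merged into one kernel-verified Lean document; each statement's English description precedes it below -/
import Mathlib

section
/- Let K be a finite extension of Q_p and F a finite field extension of K of odd degree m, totally considered as an étale K-algebra with a single factor. Write Disc_{F/K} = (π)^d with d = d_1 f_1 where Diff_{F/K} = m_1^{d_1} and f_1 is the residue degree. Then the Hecke ideal H_{F/K} = Disc_{F/K} Diff_{F/K}^{-1} = m_1^{d_1(m-1)} is the square of an ideal; i.e. any field extension of odd degree of a p-adic field is Hecke unramified. -/
/-! The discriminant `(π)^(d₁ f₁)` extends to `m₁^(e₁ d₁ f₁) = m₁^(d₁ m)`, so dividing by the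
different `m₁^d₁` leaves `m₁^(d₁ (m - 1))`, whose exponent is even because `m` is odd. -/

/-- `Ideal.spanNorm` as defined in Mathlib of December 2024 (now it needs `Module.Finite`
and is defined through `Algebra.intNorm`). -/
noncomputable def spanNormOld (R : Type*) [CommRing R] {S : Type*} [CommRing S] [Algebra R S]
    (I : Ideal S) : Ideal R :=
  Ideal.span (Algebra.norm R '' (I : Set S))

theorem Ideal.map_pow_of_map_eq_pow {R S : Type*} [CommSemiring R] [CommSemiring S]
    (f : R →+* S) {I : Ideal R} {J : Ideal S} {e : ℕ} (h : I.map f = J ^ e) (n : ℕ) :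
    (I ^ n).map f = J ^ (e * n) := by
  rw [Ideal.map_pow, h, pow_mul]

theorem pow_mul_eq_pow_mul_pow_mul_pred {M : Type*} [Monoid M] (x : M) (d : ℕ) {m : ℕ}
    (hm : m ≠ 0) : x ^ (d * m) = x ^ d * x ^ (d * (m - 1)) := by
  obtain ⟨k, rfl⟩ := Nat.exists_eq_succ_of_ne_zero hm
  rw [← pow_add, Nat.succ_sub_one, Nat.mul_succ, add_comm]

theorem isSquare_pow_mul_pred_of_odd {M : Type*} [Monoid M] (x : M) (d : ℕ) {m : ℕ}
    (hm : Odd m) : IsSquare (x ^ (d * (m - 1))) :=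
  ((Nat.Odd.sub_odd hm odd_one).mul_left d).isSquare_pow x

theorem stmt1_general
    (A B : Type*) [CommRing A] [IsDomain A] [IsDiscreteValuationRing A]
    [CommRing B] [IsDomain B] [IsDiscreteValuationRing B]
    [Algebra A B]
    [IsDedekindDomain B] [NoZeroSMulDivisors A B]
    (m g e₁ f₁ d₁ : ℕ) (hm : m = 2 * g + 1) (hef : e₁ * f₁ = m)
    (hram : Ideal.map (algebraMap A B) (IsLocalRing.maximalIdeal A) =
      IsLocalRing.maximalIdeal B ^ e₁)
    (hdiff : differentIdeal A B = IsLocalRing.maximalIdeal B ^ d₁)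
    (hdisc : spanNormOld A (differentIdeal A B) =
      IsLocalRing.maximalIdeal A ^ (d₁ * f₁)) :
    Ideal.map (algebraMap A B) (spanNormOld A (differentIdeal A B)) =
        differentIdeal A B * IsLocalRing.maximalIdeal B ^ (d₁ * (m - 1)) ∧
      ∃ J : Ideal B, IsLocalRing.maximalIdeal B ^ (d₁ * (m - 1)) = J ^ 2 := by
  have hodd : Odd m := hm ▸ odd_two_mul_add_one g
  refine ⟨?_, ?_⟩
  · rw [hdisc, Ideal.map_pow_of_map_eq_pow _ hram, hdiff,
      ← pow_mul_eq_pow_mul_pow_mul_pred _ _ hodd.pos.ne', ← hef, mul_left_comm]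
  · obtain ⟨J, hJ⟩ := isSquare_pow_mul_pred_of_odd (IsLocalRing.maximalIdeal B) d₁ hodd
    exact ⟨J, hJ.trans (sq J).symm⟩

/-- let `K` be a finite extension of `ℚ_p` with valuation ring `A`
(a discrete valuation ring with maximal ideal `(π)`), and let `F/K` be a finite *field*
extension of odd degree `m`, with valuation ring `B`, unique maximal ideal `m₁`,
ramification index `e₁` and residue degree `f₁` (so `e₁ f₁ = m`), different ideal
`Diff_{F/K} = m₁^{d₁}` and discriminant `Disc_{F/K} = Nm(Diff) = (π)^{d₁ f₁}`.
Then the Hecke ideal `H_{F/K} = Disc_{F/K}·B · Diff_{F/K}⁻¹` satisfies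
`Disc·B = Diff · m₁^{d₁ (m-1)}`, i.e. `H_{F/K} = m₁^{d₁(m-1)}`, and this is the square
of an ideal of `B`: any field extension of odd degree of a p-adic field is Hecke
unramified. -/
theorem stmt1 (p : ℕ) [Fact p.Prime]
    (A B K F : Type*) [CommRing A] [IsDomain A] [IsDiscreteValuationRing A]
    [CommRing B] [IsDomain B] [IsDiscreteValuationRing B]
    [Field K] [Field F] [CharZero K]
    [Algebra ℚ_[p] K] [FiniteDimensional ℚ_[p] K]
    [Algebra A K] [IsFractionRing A K] [Algebra B F] [IsFractionRing B F]
    [Algebra A B] [Algebra K F] [Algebra A F]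
    [IsScalarTower A K F] [IsScalarTower A B F]
    [IsIntegrallyClosed A] [IsDedekindDomain B] [NoZeroSMulDivisors A B]
    (m g e₁ f₁ d₁ : ℕ) (hm : m = 2 * g + 1) (hef : e₁ * f₁ = m)
    (hdeg : Module.finrank K F = m)
    (hram : Ideal.map (algebraMap A B) (IsLocalRing.maximalIdeal A) =
      IsLocalRing.maximalIdeal B ^ e₁)
    (hdiff : differentIdeal A B = IsLocalRing.maximalIdeal B ^ d₁)
    (hdisc : spanNormOld A (differentIdeal A B) =
      IsLocalRing.maximalIdeal A ^ (d₁ * f₁)) :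
    Ideal.map (algebraMap A B) (spanNormOld A (differentIdeal A B)) =
        differentIdeal A B * IsLocalRing.maximalIdeal B ^ (d₁ * (m - 1)) ∧
      ∃ J : Ideal B, IsLocalRing.maximalIdeal B ^ (d₁ * (m - 1)) = J ^ 2 :=
  stmt1_general A B m g e₁ f₁ d₁ hm hef hram hdiff hdisc
end

section
/- Let m = 2g+1 be odd and suppose e_1,...,e_N, f_1,...,f_N, d_1,...,d_N are nonnegative integers with all e_i, f_i ≥ 1, Σ e_i f_i = m, and set d = Σ d_i f_i and h_i = d·e_i − d_i. If h_1 is odd, e_i is even for all 2 ≤ i ≤ N, and h_i is even for all 2 ≤ i ≤ N, then a contradiction follows. (Equivalently: in an odd degree local extension, if the Hecke ideal exponent h_i is odd at exactly one prime and every other prime has even ramification index, this is impossible.) -/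
/-- the combinatorial core of "Hecke ramified implies a Hecke prime exists".
`e i`, `f i` are ramification indices and residue degrees of the primes over the base
prime, `d i` the exponents of the different, `∑ d i * f i` the discriminant exponent, and
`(∑ d j * f j) * e i - d i` the exponents of the Hecke ideal.  If the total degree
`∑ e i * f i = m = 2g+1` is odd, the Hecke exponent at the distinguished prime `0` is odd,
and every other prime has even ramification index and even Hecke exponent, we get a
contradiction. -/
theorem stmt2 (N : ℕ) (hN : 0 < N) (g : ℕ) (e f d : Fin N → ℤ)
    (he : ∀ i, 1 ≤ e i) (hf : ∀ i, 1 ≤ f i) (hd : ∀ i, 0 ≤ d i)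
    (hm : ∑ i, e i * f i = 2 * g + 1)
    (h1 : Odd ((∑ j, d j * f j) * e ⟨0, hN⟩ - d ⟨0, hN⟩))
    (heven : ∀ i, i ≠ ⟨0, hN⟩ → Even (e i))
    (hheven : ∀ i, i ≠ ⟨0, hN⟩ → Even ((∑ j, d j * f j) * e i - d i)) :
    False := by
  set i0 : Fin N := ⟨0, hN⟩ with hi0
  set D : ℤ := ∑ j, d j * f j with hD
  have two0 : (2 : ZMod 2) = 0 := rfl
  have evc : ∀ x : ℤ, Even x → ((x : ZMod 2) = 0) := by
    intro x hx
    rw [ZMod.intCast_zmod_eq_zero_iff_dvd]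
    exact_mod_cast hx.two_dvd
  -- e i ≡ 0 for i ≠ i0
  have ce : ∀ i, i ≠ i0 → ((e i : ZMod 2) = 0) := fun i hi => evc _ (heven i hi)
  -- d i ≡ 0 for i ≠ i0
  have cd : ∀ i, i ≠ i0 → ((d i : ZMod 2) = 0) := by
    intro i hi
    have h := evc _ (hheven i hi)
    push_cast at h
    rw [ce i hi] at h
    linear_combination -h
  -- total degree ≡ 1
  have hsum : (∑ i, (e i : ZMod 2) * (f i : ZMod 2)) = 1 := by
    have : ((∑ i, e i * f i : ℤ) : ZMod 2) = 1 := by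
      rw [hm]; push_cast; rw [two0]; ring
    push_cast at this
    exact this
  have hef : (e i0 : ZMod 2) * (f i0 : ZMod 2) = 1 := by
    rw [← hsum]
    refine (Finset.sum_eq_single_of_mem (f := fun i => (e i : ZMod 2) * (f i : ZMod 2)) i0 (Finset.mem_univ _) fun b _ hb => ?_).symm
    show (e b : ZMod 2) * (f b : ZMod 2) = 0
    rw [ce b hb, zero_mul]
  have key : ∀ x y : ZMod 2, x * y = 1 → x = 1 ∧ y = 1 := by decide
  obtain ⟨he1, hf1⟩ := key _ _ hef
  -- D ≡ d i0
  have hDc : ((D : ZMod 2)) = (d i0 : ZMod 2) := by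
    rw [hD]
    push_cast
    rw [show (∑ j, (d j : ZMod 2) * (f j : ZMod 2)) = (d i0 : ZMod 2) * (f i0 : ZMod 2) from
      Finset.sum_eq_single_of_mem i0 (Finset.mem_univ _) fun b _ hb => by
        rw [cd b hb, zero_mul], hf1, mul_one]
  -- the Hecke exponent at i0 is ≡ 0, contradicting oddness
  obtain ⟨k, hk⟩ := h1
  have : ((D * e i0 - d i0 : ℤ) : ZMod 2) = 1 := by
    rw [hk]; push_cast; rw [two0]; ring
  rw [Int.cast_sub, Int.cast_mul, he1, mul_one, hDc, sub_self] at this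
  exact absurd this (by decide)
end

section
/- Let K be a field of characteristic not 2 and a, b, c ∈ K^×. The ternary quadratic form a x² + b y² + c z² has a nontrivial zero over K if and only if the Hilbert-symbol-type condition holds: the quaternion algebra (−ac, −bc) over K is split (equivalently, the Hilbert symbol (−ac, −bc) = 1). -/
open Quaternion

/-!
A square-zero element `q ≠ 0` of `ℍ[K, α, β]` must be a pure quaternion, and then
`0 = q² = α x² + β y² - αβ z²`; for `α = -ac`, `β = -bc` and
`(X, Y, Z) = (b y, a x, a b z)`, `a X² + b Y² + c Z²` is `-ab/c` times this form.
A split algebra has such an element. Conversely, an isotropic vector of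
`a X² + b Y² + c Z²` writes `β` as a norm `u² - α v²` of `K(√α)`, and then
`i ↦ !![0, 1; α, 0]`, `j ↦ !![u, v; -α v, -u]` is an injective, hence bijective,
algebra map `ℍ[K, α, β] → M₂(K)`.
-/

def IsIsotropicTernary {R : Type*} [CommRing R] (a b c : R) : Prop :=
  ∃ x y z : R, (x, y, z) ≠ (0, 0, 0) ∧ a * x ^ 2 + b * y ^ 2 + c * z ^ 2 = 0

section Field

variable {K : Type*} [Field K]

theorem exists_sq_sub_sq_mul_sq_eq (h2 : (2 : K) ≠ 0) {d : K} (hd : d ≠ 0) (β : K) :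
    ∃ u v : K, u ^ 2 - d ^ 2 * v ^ 2 = β :=
  -- `u - d v = 1` and `u + d v = β`
  ⟨(β + 1) / 2, (β - 1) / (2 * d), by field_simp; ring⟩

theorem IsIsotropicTernary.exists_sq_sub_mul_sq_eq (h2 : (2 : K) ≠ 0) {a b c : K}
    (ha : a ≠ 0) (hc : c ≠ 0) (h : IsIsotropicTernary a b c) :
    ∃ u v : K, u ^ 2 - -(a * c) * v ^ 2 = -(b * c) := by
  obtain ⟨x, y, z, hxyz, hq⟩ := h
  by_cases hy : y = 0
  · subst hy
    have hx : x ≠ 0 := by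
      rintro rfl
      have hz : z = 0 := by simpa [hc] using hq
      simp [hz] at hxyz
    have hz : z ≠ 0 := by
      rintro rfl
      exact hx (by simpa [ha] using hq)
    have hsq : -(a * c) = (c * z / x) ^ 2 := by
      field_simp
      linear_combination -hq
    rw [hsq]
    exact exists_sq_sub_sq_mul_sq_eq h2 (div_ne_zero (mul_ne_zero hc hz) hx) _
  · exact ⟨c * z / y, x / y, by field_simp; linear_combination hq⟩

theorem IsIsotropicTernary.of_neg_mul {a b c : K} (ha : a ≠ 0) (hb : b ≠ 0) (hc : c ≠ 0)
    (h : IsIsotropicTernary (-(a * c)) (-(b * c)) (-(-(a * c) * -(b * c)))) :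
    IsIsotropicTernary a b c := by
  obtain ⟨x, y, z, hxyz, hq⟩ := h
  refine ⟨b * y, a * x, a * b * z, ?_, ?_⟩
  · simpa [ha, hb, and_comm, and_left_comm] using hxyz
  · have hform : a * x ^ 2 + b * y ^ 2 + a * b * c * z ^ 2 = 0 := by
      have : c * (a * x ^ 2 + b * y ^ 2 + a * b * c * z ^ 2) = 0 := by linear_combination -hq
      simpa [hc] using this
    linear_combination a * b * hform

end Field

theorem exists_ne_zero_mul_self_eq_zero_of_ringEquiv_matrix {R A : Type*} [Semiring R]
    [Nontrivial R] [Semiring A] (e : A ≃+* Matrix (Fin 2) (Fin 2) R) :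
    ∃ q : A, q ≠ 0 ∧ q * q = 0 := by
  refine ⟨e.symm !![0, 1; 0, 0], ?_, ?_⟩
  · rw [ne_eq, map_eq_zero_iff _ e.symm.injective]
    intro h
    simpa using congrFun (congrFun h 0) 1
  · have hN : (!![0, 1; 0, 0] : Matrix (Fin 2) (Fin 2) R) * !![0, 1; 0, 0] = 0 := by
      ext i j; fin_cases i <;> fin_cases j <;> simp
    rw [← map_mul, hN, map_zero]

namespace QuaternionAlgebra

section Ring

variable {R : Type*} [CommRing R] {c₁ c₃ : R}

theorem re_eq_zero_of_mul_self_eq_zero [NoZeroDivisors R] (h2 : (2 : R) ≠ 0)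
    {q : ℍ[R, c₁, c₃]} (hq : q * q = 0) : q.re = 0 := by
  obtain ⟨hre, hI, hJ, hK⟩ := QuaternionAlgebra.ext_iff.mp hq
  simp only [re_mul, imI_mul, imJ_mul, imK_mul, re_zero, imI_zero, imJ_zero, imK_zero]
    at hre hI hJ hK
  by_contra hr
  have cancel (t : R) (ht : 2 * q.re * t = 0) : t = 0 :=
    (mul_eq_zero.mp ht).resolve_left (mul_ne_zero h2 hr)
  have hx := cancel q.imI (by linear_combination hI)
  have hy := cancel q.imJ (by linear_combination hJ)
  have hz := cancel q.imK (by linear_combination hK)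
  exact hr <| mul_self_eq_zero.mp <| by
    linear_combination hre - c₁ * q.imI * hx - c₃ * q.imJ * hy + c₁ * c₃ * q.imK * hz

theorem isIsotropicTernary_of_mul_self_eq_zero [NoZeroDivisors R] (h2 : (2 : R) ≠ 0)
    {q : ℍ[R, c₁, c₃]} (hq0 : q ≠ 0) (hq : q * q = 0) :
    IsIsotropicTernary c₁ c₃ (-(c₁ * c₃)) := by
  have hr := re_eq_zero_of_mul_self_eq_zero h2 hq
  refine ⟨q.imI, q.imJ, q.imK, fun h => hq0 ?_, ?_⟩
  · simp only [Prod.mk.injEq] at h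
    exact QuaternionAlgebra.ext hr h.1 h.2.1 h.2.2
  · have := congrArg re hq
    simp only [re_mul, re_zero, hr] at this
    linear_combination this

end Ring

variable {K : Type*} [Field K] {α β : K}

def matrixBasis (u v : K) (huv : u ^ 2 - α * v ^ 2 = β) :
    Basis (Matrix (Fin 2) (Fin 2) K) α 0 β where
  i := !![0, 1; α, 0]
  j := !![u, v; -α * v, -u]
  k := !![0, 1; α, 0] * !![u, v; -α * v, -u]
  i_mul_i := by
    ext i j; fin_cases i <;> fin_cases j <;> simp
  j_mul_j := by
    ext i j; fin_cases i <;> fin_cases j <;> simp [← huv] <;> ring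
  i_mul_j := rfl
  j_mul_i := by
    ext i j; fin_cases i <;> fin_cases j <;> simp <;> ring

theorem nonempty_algEquiv_matrix_of_sq_sub_mul_sq_eq (h2 : (2 : K) ≠ 0) (hα : α ≠ 0)
    (hβ : β ≠ 0) {u v : K} (huv : u ^ 2 - α * v ^ 2 = β) :
    Nonempty (ℍ[K, α, β] ≃ₐ[K] Matrix (Fin 2) (Fin 2) K) := by
  set f := (matrixBasis u v huv).liftHom
  have hinj : Function.Injective f := by
    rw [injective_iff_map_eq_zero]
    rintro ⟨r, x, y, z⟩ hq
    have entry (i j : Fin 2) := congrFun (congrFun hq i) j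
    simp only [f, Basis.liftHom_apply, Basis.lift, matrixBasis,
      Algebra.algebraMap_eq_smul_one] at entry
    have e00 : r + y * u - z * (α * v) = 0 := by simpa [sub_eq_add_neg] using entry 0 0
    have e01 : x + y * v - z * u = 0 := by simpa [sub_eq_add_neg] using entry 0 1
    have e10 : x * α - y * (α * v) + z * (α * u) = 0 := by simpa [sub_eq_add_neg] using entry 1 0
    have e11 : r - y * u + z * (α * v) = 0 := by simpa [sub_eq_add_neg] using entry 1 1
    have hr : r = 0 := by
      have : 2 * r = 0 := by linear_combination e00 + e11
      simpa [h2] using this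
    have hx : x = 0 := by
      have : 2 * α * x = 0 := by linear_combination α * e01 + e10
      simpa [h2, hα] using this
    have hy : β * y = 0 := by
      linear_combination u * e00 - α * v * e01 - y * huv - u * hr + α * v * hx
    have hz : β * z = 0 := by
      linear_combination v * e00 - u * e01 - z * huv + u * hx - v * hr
    exact QuaternionAlgebra.ext hr hx ((mul_eq_zero.mp hy).resolve_left hβ)
      ((mul_eq_zero.mp hz).resolve_left hβ)
  have hrank : Module.finrank K ℍ[K, α, β] = Module.finrank K (Matrix (Fin 2) (Fin 2) K) := by
    simp [finrank_eq_four, Module.finrank_matrix]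
  have hsurj : Function.Surjective f :=
    (LinearMap.injective_iff_surjective_of_finrank_eq_finrank (f := f.toLinearMap) hrank).mp hinj
  exact ⟨AlgEquiv.ofBijective f ⟨hinj, hsurj⟩⟩

end QuaternionAlgebra

/-- over a field `K` of characteristic `≠ 2`, for `a, b, c ∈ K^×` the
ternary quadratic form `a x² + b y² + c z²` is isotropic (has a nontrivial zero) if and
only if the quaternion algebra `(-ac, -bc)` over `K` is split, i.e. isomorphic to the
algebra of `2 × 2` matrices over `K` (equivalently, the Hilbert symbol `(-ac, -bc) = 1`). -/
theorem stmt4 (K : Type*) [Field K] (hchar : (2 : K) ≠ 0) (a b c : K)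
    (ha : a ≠ 0) (hb : b ≠ 0) (hc : c ≠ 0) :
    (∃ x y z : K, (x, y, z) ≠ (0, 0, 0) ∧ a * x ^ 2 + b * y ^ 2 + c * z ^ 2 = 0) ↔
      Nonempty (ℍ[K, -(a * c), -(b * c)] ≃ₐ[K] Matrix (Fin 2) (Fin 2) K) := by
  have hα : -(a * c) ≠ 0 := neg_ne_zero.mpr (mul_ne_zero ha hc)
  have hβ : -(b * c) ≠ 0 := neg_ne_zero.mpr (mul_ne_zero hb hc)
  constructor
  · intro h
    obtain ⟨u, v, huv⟩ := IsIsotropicTernary.exists_sq_sub_mul_sq_eq hchar ha hc h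
    exact QuaternionAlgebra.nonempty_algEquiv_matrix_of_sq_sub_mul_sq_eq hchar hα hβ huv
  · rintro ⟨φ⟩
    obtain ⟨q, hq0, hq⟩ := exists_ne_zero_mul_self_eq_zero_of_ringEquiv_matrix φ.toRingEquiv
    exact (QuaternionAlgebra.isIsotropicTernary_of_mul_self_eq_zero hchar hq0 hq).of_neg_mul
      ha hb hc
end

section
/- Let K be a local field of characteristic 0 of odd residue characteristic, and let L = K(√d) be a ramified quadratic extension. Writing O_L = O_K[α] with α = a + b√d, the valuation w(ᾱ − α) = w(2b√d) is even if and only if d is a unit of O_K up to squares; consequently, the discriminant exponent e of the cubic étale algebra F = K(√d) × K satisfies: the Hecke ideal H_{F/K} = (m_1 m_2)^e is a square if and only if d ∈ O_K^× modulo squares. -/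
/-!
Since `σα - α = -2b√d`, the element `δ` satisfies `δ² = (2b)²d` in `L`. Write `(2b)²d = u ϖ^N`
with `u` a unit and `ϖ` a uniformizer of `K`; because `𝔪_K 𝓞_L = 𝔪_L²`, comparing ideals of `𝓞_L`
gives `2e = 2N`. Hence `e ≡ N ≡ v_K(d) (mod 2)`, and `u ϖ^N` is a unit times a square exactly
when `N` is even. Finally, ideals of a DVR are powers of its maximal ideal, so `𝔪_L^e` is a
square iff `e` is even.
-/

open IsLocalRing Ideal

section UnitMulSq

variable {R K : Type*} [CommRing R] [Field K] [Algebra R K]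

variable (R) in
def IsUnitMulSq (d : K) : Prop :=
  ∃ u : R, IsUnit u ∧ ∃ y : K, y ≠ 0 ∧ d = algebraMap R K u * y ^ 2

theorem isUnitMulSq_sq_mul_iff {z : K} (hz : z ≠ 0) {d : K} :
    IsUnitMulSq R (z ^ 2 * d) ↔ IsUnitMulSq R d := by
  constructor
  · rintro ⟨u, hu, y, hy, h⟩
    refine ⟨u, hu, y / z, div_ne_zero hy hz, ?_⟩
    rw [div_pow, mul_div_assoc', eq_div_iff (pow_ne_zero 2 hz), ← h, mul_comm]
  · rintro ⟨u, hu, y, hy, rfl⟩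
    exact ⟨u, hu, z * y, mul_ne_zero hz hy, by ring⟩

end UnitMulSq

section DVR

variable {R : Type*} [CommRing R] [IsDomain R] [IsDiscreteValuationRing R]

theorem maximalIdeal_pow_inj {i j : ℕ} : maximalIdeal R ^ i = maximalIdeal R ^ j ↔ i = j := by
  rw [← IsDiscreteValuationRing.idealOrderIsoENat_symm_apply_coe,
    ← IsDiscreteValuationRing.idealOrderIsoENat_symm_apply_coe, OrderIso.apply_eq_iff_eq,
    ← ENat.natCast_inj]
  rfl

theorem exists_maximalIdeal_pow_eq_sq_iff {n : ℕ} :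
    (∃ J : Ideal R, maximalIdeal R ^ n = J ^ 2) ↔ Even n := by
  constructor
  · rintro ⟨J, hJ⟩
    obtain ⟨ϖ, hϖ⟩ := IsDiscreteValuationRing.exists_irreducible R
    have hJ0 : J ≠ ⊥ := by
      rintro rfl
      rw [hϖ.maximalIdeal_eq, span_singleton_pow, pow_two, bot_mul, span_singleton_eq_bot] at hJ
      exact pow_ne_zero n hϖ.ne_zero hJ
    obtain ⟨k, rfl⟩ := IsDiscreteValuationRing.ideal_eq_span_pow_irreducible hJ0 hϖ
    rw [← span_singleton_pow, ← hϖ.maximalIdeal_eq, ← pow_mul, maximalIdeal_pow_inj] at hJ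
    exact ⟨k, by omega⟩
  · rintro ⟨k, rfl⟩
    exact ⟨maximalIdeal R ^ k, by rw [← pow_mul, mul_two]⟩

variable {K : Type*} [Field K] [Algebra R K] [IsFractionRing R K]

theorem eq_of_units_smul_zpow_eq {ϖ : R} (hϖ : Irreducible ϖ) {u v : Rˣ} {m n : ℤ}
    (h : u • algebraMap R K ϖ ^ m = v • algebraMap R K ϖ ^ n) : m = n := by
  have hϖK : algebraMap R K ϖ ≠ 0 := by simpa using hϖ.ne_zero
  set N : ℕ := m.natAbs + n.natAbs
  have hm : ((m + N).toNat : ℤ) = m + N := Int.toNat_of_nonneg (by omega)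
  have hn : ((n + N).toNat : ℤ) = n + N := Int.toNat_of_nonneg (by omega)
  have hA : (u : R) * ϖ ^ (m + N).toNat = v * ϖ ^ (n + N).toNat := by
    apply IsFractionRing.injective R K
    simp only [map_mul, map_pow, ← zpow_natCast, hm, hn, zpow_add₀ hϖK, ← mul_assoc]
    simpa only [Units.smul_def, Algebra.smul_def] using
      congrArg (· * algebraMap R K ϖ ^ (N : ℤ)) h
  have := IsDiscreteValuationRing.unit_mul_pow_congr_pow hϖ hϖ u v _ _ hA
  omega

theorem isUnitMulSq_units_smul_zpow_iff {ϖ : R} (hϖ : Irreducible ϖ) (u : Rˣ) (n : ℤ) :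
    IsUnitMulSq R (u • algebraMap R K ϖ ^ n) ↔ Even n := by
  have hϖK : algebraMap R K ϖ ≠ 0 := by simpa using hϖ.ne_zero
  constructor
  · rintro ⟨v, hv, y, hy, h⟩
    obtain ⟨m, w, rfl⟩ :=
      IsDiscreteValuationRing.exists_units_eq_smul_zpow_of_irreducible hϖ hy
    refine ⟨m, eq_of_units_smul_zpow_eq hϖ (u := u) (v := hv.unit * w ^ 2) (h.trans ?_)⟩
    simp only [Units.smul_def, Algebra.smul_def, Units.val_mul, Units.val_pow_eq_pow_val,
      map_mul, map_pow, IsUnit.unit_spec, zpow_add₀ hϖK]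
    ring
  · rintro ⟨m, rfl⟩
    refine ⟨u, u.isUnit, algebraMap R K ϖ ^ m, zpow_ne_zero m hϖK, ?_⟩
    rw [Units.smul_def, Algebra.smul_def, zpow_add₀ hϖK, ← sq]

end DVR

section Ramified

variable {A B K L : Type*} [CommRing A] [IsDomain A] [IsDiscreteValuationRing A]
  [CommRing B] [IsDomain B] [IsDiscreteValuationRing B] [Field K] [Field L]
  [Algebra A K] [IsFractionRing A K] [Algebra B L] [IsFractionRing B L]
  [Algebra A B] [Algebra K L] [Algebra A L]
  [IsScalarTower A K L] [IsScalarTower A B L]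

theorem span_algebraMap_pow_eq_maximalIdeal_pow {r : ℕ}
    (hram : map (algebraMap A B) (maximalIdeal A) = maximalIdeal B ^ r)
    {ϖ : A} (hϖ : Irreducible ϖ) (n : ℕ) :
    span {algebraMap A B (ϖ ^ n)} = maximalIdeal B ^ (r * n) := by
  rw [← Set.image_singleton, ← map_span, ← span_singleton_pow, ← hϖ.maximalIdeal_eq,
    Ideal.map_pow, hram, ← pow_mul]

theorem natCast_eq_mul_of_algebraMap_eq_units_smul_zpow {r : ℕ}
    (hram : map (algebraMap A B) (maximalIdeal A) = maximalIdeal B ^ r)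
    {ϖ : A} (hϖ : Irreducible ϖ) {x : B} {e : ℕ} (hx : span {x} = maximalIdeal B ^ e)
    {u : Aˣ} {N : ℤ} (h : algebraMap B L x = algebraMap K L (u • algebraMap A K ϖ ^ N)) :
    (e : ℤ) = r * N := by
  have hϖK : algebraMap A K ϖ ≠ 0 := by simpa using hϖ.ne_zero
  obtain ⟨a, b, rfl⟩ : ∃ a b : ℕ, N = a - b := ⟨_, _, (Int.toNat_sub_toNat_neg N).symm⟩
  have hB : x * algebraMap A B (ϖ ^ b) = algebraMap A B (u * ϖ ^ a) := by
    apply IsFractionRing.injective B L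
    rw [map_mul, h, ← IsScalarTower.algebraMap_apply, ← IsScalarTower.algebraMap_apply,
      IsScalarTower.algebraMap_apply A K L, IsScalarTower.algebraMap_apply A K L (u * ϖ ^ a),
      ← map_mul, Units.smul_def, Algebra.smul_def, zpow_sub₀ hϖK]
    congr 1
    simp only [map_mul, map_pow, zpow_natCast]
    field_simp
  have hspan := congrArg (fun y => span {y}) hB
  simp only [← span_singleton_mul_span_singleton, hx, map_mul,
    span_algebraMap_pow_eq_maximalIdeal_pow hram hϖ, span_singleton_mul_left_unit (u.isUnit.map (algebraMap A B)), ← pow_add,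
    maximalIdeal_pow_inj] at hspan
  have := congrArg (Nat.cast : ℕ → ℤ) hspan
  push_cast at this
  linear_combination this

end Ramified

theorem stmt6_general (A B K L : Type*) [CommRing A] [IsDomain A] [IsDiscreteValuationRing A]
    [CommRing B] [IsDomain B] [IsDiscreteValuationRing B]
    [Field K] [Field L] [CharZero K]
    [Algebra A K] [IsFractionRing A K] [Algebra B L] [IsFractionRing B L]
    [Algebra A B] [Algebra K L] [Algebra A L]
    [IsScalarTower A K L] [IsScalarTower A B L]
    (d : K) (hd : d ≠ 0) (sq : L) (hsq : sq ^ 2 = algebraMap K L d)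
    (hram : Ideal.map (algebraMap A B) (IsLocalRing.maximalIdeal A) =
      IsLocalRing.maximalIdeal B ^ 2)
    (σ : L ≃ₐ[K] L) (hσ : σ sq = -sq)
    (α : B)
    (a b : K) (hb : b ≠ 0)
    (hα : algebraMap B L α = algebraMap K L a + algebraMap K L b * sq)
    (δ : B) (hδ : algebraMap B L δ = σ (algebraMap B L α) - algebraMap B L α)
    (e : ℕ) (he : Ideal.span {δ} = IsLocalRing.maximalIdeal B ^ e) :
    (Even e ↔ ∃ u : A, IsUnit u ∧ ∃ y : K, y ≠ 0 ∧ d = algebraMap A K u * y ^ 2) ∧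
    ((∃ J : Ideal B, IsLocalRing.maximalIdeal B ^ e = J ^ 2) ↔
      ∃ u : A, IsUnit u ∧ ∃ y : K, y ≠ 0 ∧ d = algebraMap A K u * y ^ 2) := by
  have h2b : 2 * b ≠ 0 := mul_ne_zero two_ne_zero hb
  have hc : (2 * b) ^ 2 * d ≠ 0 := mul_ne_zero (pow_ne_zero 2 h2b) hd
  obtain ⟨ϖ, hϖ⟩ := IsDiscreteValuationRing.exists_irreducible A
  obtain ⟨N, u, hN⟩ := IsDiscreteValuationRing.exists_units_eq_smul_zpow_of_irreducible hϖ hc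
  have hδ' : algebraMap B L δ = algebraMap K L (-(2 * b)) * sq := by
    rw [hδ, hα, map_add, map_mul, σ.commutes, σ.commutes, hσ, map_neg, map_mul, map_ofNat]
    ring
  have hδsq : algebraMap B L (δ ^ 2) = algebraMap K L (u • algebraMap A K ϖ ^ N) := by
    rw [← hN, map_pow, hδ', mul_pow, hsq, ← map_pow, ← map_mul, neg_sq]
  have heN : ((2 * e : ℕ) : ℤ) = 2 * N :=
    natCast_eq_mul_of_algebraMap_eq_units_smul_zpow hram hϖ
      (by rw [← span_singleton_pow, he, ← pow_mul, mul_comm]) hδsq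
  have hparity : Even e ↔ IsUnitMulSq A d := by
    rw [← isUnitMulSq_sq_mul_iff h2b, hN,
      isUnitMulSq_units_smul_zpow_iff hϖ, show N = e by omega, Int.even_coe_nat]
  exact ⟨hparity, exists_maximalIdeal_pow_eq_sq_iff.trans hparity⟩

/-- let `K` be a local field of characteristic `0` with valuation ring `A`
(a DVR) and let `L = K(√d)` be a ramified quadratic extension with valuation ring `B`
(a DVR with normalized valuation `w`), so `F = L × K` is the associated cubic étale
algebra with primes `m₁` (from `L`) and `m₂` (from `K`).  Write `𝓞_L = 𝓞_K[α]` with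
`α = a + b√d`, and let `e = w(σα - α) = w(2b√d)` be the exponent of the different of
`L/K` (Serre, Local Fields, p. 64), where `σ` is the nontrivial automorphism.  Then
`e` is even if and only if `d` is a unit of `𝓞_K` up to squares; consequently the
Hecke ideal `H_{F/K} = (m₁ m₂)^e` is a square (equivalently `m₁^e` is the square of
an ideal of `B`) if and only if `d ∈ 𝓞_K^×` modulo squares. -/
theorem stmt6 (A B K L : Type*) [CommRing A] [IsDomain A] [IsDiscreteValuationRing A]
    [CommRing B] [IsDomain B] [IsDiscreteValuationRing B]
    [Field K] [Field L] [CharZero K]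
    [Algebra A K] [IsFractionRing A K] [Algebra B L] [IsFractionRing B L]
    [Algebra A B] [Algebra K L] [Algebra A L]
    [IsScalarTower A K L] [IsScalarTower A B L]
    (d : K) (hd : d ≠ 0) (sq : L) (hsq : sq ^ 2 = algebraMap K L d)
    (hdeg : Module.finrank K L = 2)
    (hram : Ideal.map (algebraMap A B) (IsLocalRing.maximalIdeal A) =
      IsLocalRing.maximalIdeal B ^ 2)
    (σ : L ≃ₐ[K] L) (hσ : σ sq = -sq)
    (α : B) (hgen : Algebra.adjoin A {α} = (⊤ : Subalgebra A B))
    (a b : K) (hb : b ≠ 0)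
    (hα : algebraMap B L α = algebraMap K L a + algebraMap K L b * sq)
    (δ : B) (hδ : algebraMap B L δ = σ (algebraMap B L α) - algebraMap B L α)
    (e : ℕ) (he : Ideal.span {δ} = IsLocalRing.maximalIdeal B ^ e) :
    (Even e ↔ ∃ u : A, IsUnit u ∧ ∃ y : K, y ≠ 0 ∧ d = algebraMap A K u * y ^ 2) ∧
    ((∃ J : Ideal B, IsLocalRing.maximalIdeal B ^ e = J ^ 2) ↔
      ∃ u : A, IsUnit u ∧ ∃ y : K, y ≠ 0 ∧ d = algebraMap A K u * y ^ 2) :=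
  stmt6_general A B K L d hd sq hsq hram σ hσ α a b hb hα δ hδ e he
end

section
/- Let F/K be a finite extension of number fields and suppose that the class of the Hecke ideal H_{F/K} = Disc_{F/K}·Diff_{F/K}^{-1} is a square in the class group Cl_F (Hecke's theorem). Let L = F(√t) be an everywhere unramified quadratic extension of F with Nm_{F/K}(t) ∈ K^{×2}, and let χ: Cl_F → Z/2Z be the associated quadratic character. Writing H_{F/K} = Π_w w^{d_w}, the number of primes w with d_w odd that are inert in L/F is even. -/
open NumberField
open scoped nonZeroDivisors

lemma stmt8_aux_pow (x : Multiplicative (ZMod 2)) (n : ℕ) :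
    x ^ n = if Odd n ∧ x ≠ 1 then Multiplicative.ofAdd (1 : ZMod 2) else 1 := by
  have hsq : ∀ y : Multiplicative (ZMod 2), y ^ 2 = 1 := by decide
  rcases Nat.even_or_odd n with he | ho
  · rw [if_neg (fun h => (Nat.not_odd_iff_even.mpr he) h.1)]
    obtain ⟨k, hk⟩ := he
    have h2 : x ^ n = (x ^ 2) ^ k := by rw [← pow_mul]; congr 1; omega
    rw [h2, hsq, one_pow]
  · obtain ⟨k, hk⟩ := ho
    have hxn : x ^ n = x := by
      rw [hk, pow_add, pow_mul, hsq, one_pow, one_mul, pow_one]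
    rw [hxn]
    by_cases hx1 : x = 1
    · rw [if_neg (fun h => h.2 hx1), hx1]
    · rw [if_pos ⟨⟨k, hk⟩, hx1⟩]
      exact (by decide : ∀ y : Multiplicative (ZMod 2), y ≠ 1 → y = Multiplicative.ofAdd 1) x hx1

/-- Hecke reciprocity: let `F/K` be an extension of number fields,
`Diff` the relative different and `Disc = Nm(Diff)` the relative discriminant, and
write the Hecke ideal as `H = Disc·𝓞 F · Diff⁻¹ = ∏ (w i)^(d i)` over (nonzero prime)
ideals `w i`, so `Disc·𝓞 F = Diff · ∏ (w i)^(d i)`.  Let `L = F(√t)` be an everywhere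
unramified quadratic extension with `Nm_{F/K}(t) ∈ K^{×2}`, with associated quadratic
character `χ : Cl_F → ℤ/2ℤ` (a prime `w` is inert in `L/F` iff `χ([w]) ≠ 1`).
Suppose (Hecke's theorem) that the class of `H` is a square in `Cl_F`.  Then the
number of primes `w i` with `d i` odd that are inert in `L/F` is even. -/
theorem stmt8 (K F : Type*) [Field K] [Field F] [NumberField K] [NumberField F]
    [Algebra K F] (ι : Type*) [Fintype ι]
    (w : ι → (Ideal (𝓞 F))⁰) (d : ι → ℕ)
    (hprime : ∀ i, (w i : Ideal (𝓞 F)).IsPrime)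
    (hH : Ideal.map (algebraMap (𝓞 K) (𝓞 F))
        (Ideal.spanNorm (𝓞 K) (differentIdeal (𝓞 K) (𝓞 F))) =
      differentIdeal (𝓞 K) (𝓞 F) * ∏ i, (w i : Ideal (𝓞 F)) ^ d i)
    (χ : ClassGroup (𝓞 F) →* Multiplicative (ZMod 2))
    (hsq : ∃ c : ClassGroup (𝓞 F), ∏ i, ClassGroup.mk0 (w i) ^ d i = c ^ 2) :
    Even (Nat.card {i : ι // Odd (d i) ∧ χ (ClassGroup.mk0 (w i)) ≠ 1}) := by
  classical
  obtain ⟨c, hc⟩ := hsq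
  have hsq1 : ∀ y : Multiplicative (ZMod 2), y ^ 2 = 1 := by decide
  have h1 : ∏ i, χ (ClassGroup.mk0 (w i)) ^ d i = 1 := by
    have := congrArg χ hc
    simpa [map_prod, map_pow, hsq1] using this
  set P : ι → Prop := fun i => Odd (d i) ∧ χ (ClassGroup.mk0 (w i)) ≠ 1 with hP
  have h2 : ∏ i, χ (ClassGroup.mk0 (w i)) ^ d i
      = Multiplicative.ofAdd (1 : ZMod 2) ^ (Finset.univ.filter P).card := by
    calc ∏ i, χ (ClassGroup.mk0 (w i)) ^ d i
        = ∏ i, (if P i then Multiplicative.ofAdd (1 : ZMod 2) else 1) := by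
          refine Finset.prod_congr rfl fun i _ => ?_
          exact stmt8_aux_pow _ _
      _ = ∏ i ∈ Finset.univ.filter P, Multiplicative.ofAdd (1 : ZMod 2) := by
          rw [Finset.prod_filter]
      _ = _ := by rw [Finset.prod_const]
  rw [h2] at h1
  set N := (Finset.univ.filter P).card with hN
  have h3 : ((N : ZMod 2)) = 0 := by
    have : Multiplicative.ofAdd ((N : ZMod 2) * 1) = Multiplicative.ofAdd (0 : ZMod 2) := by
      rw [← nsmul_eq_mul, ofAdd_nsmul]
      exact h1
    simpa using Multiplicative.ofAdd.injective this
  have hEvenN : Even N := by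
    rcases Nat.even_or_odd N with h | h
    · exact h
    · exfalso
      obtain ⟨k, hk⟩ := h
      have : (N : ZMod 2) = ((2:ℕ):ZMod 2) * (k : ZMod 2) + 1 := by push_cast [hk]; ring
      rw [this, show ((2:ℕ):ZMod 2) = 0 by decide, zero_mul, zero_add] at h3
      exact one_ne_zero h3
  have hcard : Nat.card {i : ι // P i} = N := by
    rw [Nat.card_eq_fintype_card, Fintype.card_subtype]
  rwa [hcard]
end

section
/- Fix u ≥ 0. For the probability distribution on finite-dimensional F_2-vector spaces given by P(V) = (|∧²V| / (|Aut_{F_2}(V)| · |V|^u)) · Π_{i≥1}(1 + 2^{−u−i})^{−1}, the n-th moment of |V| equals Π_{k=0}^{n−1}(1 + 2^{k−u}). In particular for u = 0 and n = 1 the average of |V| is 2, and for u = 1, n = 1 it is 3/2. -/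
/-!
Put `a_d = ∏_{j=1}^{d} (2^j - 1)`, so that `|Aut V| = 2^{d(d-1)/2} a_d`, and
`E(x) = ∑_d x^d / a_d`. Then Malle's weight of a `d`-dimensional space is `y^d / a_d` with
`y = 2^{-u}`, up to the normalising constant. Comparing coefficients gives `E(2x) = (1 + x) E(x)`;
iterating downwards and using `E(x / 2^N) → E(0) = 1` yields Euler's product
`E(x) = ∏_{i ≥ 1} (1 + x / 2^i)`, so the constant is `1 / E(y)` and the `n`-th moment is
`E(2^n y) / E(y) = ∏_{k < n} (1 + 2^k y)`.
-/

open Finset Filter Topology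

/-- Malle's distribution with parameter `u` on isomorphism classes of finite
`F₂`-vector spaces, recorded as a function of the dimension `d`:
`P(V) = |∧²V| / (|Aut V| · |V|^u) · ∏_{i ≥ 1} (1 + 2^{-u-i})⁻¹`
where `|∧²V| = 2^{d(d-1)/2}`, `|Aut V| = ∏_{i<d} (2^d - 2^i)` and `|V| = 2^d`. -/
noncomputable def malleP (u d : ℕ) : ℝ :=
  (2 : ℝ) ^ (d * (d - 1) / 2) /
      ((∏ i ∈ Finset.range d, ((2 : ℝ) ^ d - 2 ^ i)) * 2 ^ (d * u)) *
    (∏' i : ℕ, (1 + ((2 : ℝ) ^ (u + i + 1))⁻¹))⁻¹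

section prodPowSubOne

variable {R : Type*} [CommRing R]

def prodPowSubOne (q : R) (d : ℕ) : R := ∏ j ∈ range d, (q ^ (j + 1) - 1)

@[simp]
theorem prodPowSubOne_zero (q : R) : prodPowSubOne q 0 = 1 := prod_range_zero _

theorem prodPowSubOne_succ (q : R) (d : ℕ) :
    prodPowSubOne q (d + 1) = prodPowSubOne q d * (q ^ (d + 1) - 1) :=
  prod_range_succ _ _

theorem prod_range_pow_sub_pow (q : R) (d : ℕ) :
    ∏ i ∈ range d, (q ^ d - q ^ i) = q ^ (d * (d - 1) / 2) * prodPowSubOne q d := by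
  have hfactor : ∀ i ∈ range d, q ^ d - q ^ i = q ^ i * (q ^ (d - 1 - i + 1) - 1) := by
    intro i hi
    have hexp : i + (d - 1 - i + 1) = d := by grind
    rw [mul_sub, mul_one, ← pow_add, hexp]
  rw [prod_congr rfl hfactor, prod_mul_distrib, prod_pow_eq_pow_sum, sum_range_id,
    prod_range_reflect (fun j => q ^ (j + 1) - 1) d, prodPowSubOne]

theorem prodPowSubOne_pos {q : ℝ} (hq : 1 < q) (d : ℕ) : 0 < prodPowSubOne q d :=
  prod_pos fun j _ => sub_pos.2 (one_lt_pow₀ hq j.succ_ne_zero)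

end prodPowSubOne

section eulerSeries

variable {q : ℝ}

noncomputable def eulerSeries (q x : ℝ) : ℝ := ∑' d : ℕ, x ^ d / prodPowSubOne q d

theorem summable_eulerSeries (hq : 1 < q) (x : ℝ) :
    Summable fun d : ℕ => x ^ d / prodPowSubOne q d := by
  refine summable_of_ratio_norm_eventually_le (r := 1 / 2) (by norm_num) ?_
  filter_upwards [(tendsto_pow_atTop_atTop_of_one_lt hq).eventually_ge_atTop (2 * |x| + 1)]
    with d hd
  have ha := prodPowSubOne_pos hq d
  have hc : 2 * |x| + 1 ≤ q ^ (d + 1) := hd.trans (pow_le_pow_right₀ hq.le d.le_succ)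
  have hc' : 0 < q ^ (d + 1) - 1 := sub_pos.2 (one_lt_pow₀ hq d.succ_ne_zero)
  rw [prodPowSubOne_succ, Real.norm_eq_abs, Real.norm_eq_abs, abs_div, abs_div, abs_of_pos ha,
    abs_of_pos (mul_pos ha hc'), pow_succ, abs_mul, mul_div_mul_comm, mul_comm (1 / 2)]
  refine mul_le_mul_of_nonneg_left ?_ (by positivity)
  rw [div_le_iff₀ hc']
  linarith

theorem eulerSeries_eq_one_add (hq : 1 < q) (x : ℝ) :
    eulerSeries q x = 1 + ∑' d : ℕ, x ^ (d + 1) / prodPowSubOne q (d + 1) := by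
  rw [eulerSeries, (summable_eulerSeries hq x).tsum_eq_zero_add]
  simp

theorem eulerSeries_zero (hq : 1 < q) : eulerSeries q 0 = 1 := by
  simp [eulerSeries_eq_one_add hq]

theorem eulerSeries_pos (hq : 1 < q) {x : ℝ} (hx : 0 ≤ x) : 0 < eulerSeries q x := by
  refine zero_lt_one.trans_le ?_
  simpa [eulerSeries] using (summable_eulerSeries hq x).le_tsum 0
    fun d _ => div_nonneg (pow_nonneg hx d) (prodPowSubOne_pos hq d).le

theorem eulerSeries_mul_left (hq : 1 < q) (x : ℝ) :
    eulerSeries q (q * x) = (1 + x) * eulerSeries q x := by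
  have hs := summable_eulerSeries hq x
  have hterm : ∀ d : ℕ, (q * x) ^ (d + 1) / prodPowSubOne q (d + 1) =
      x ^ (d + 1) / prodPowSubOne q (d + 1) + x * (x ^ d / prodPowSubOne q d) := by
    intro d
    have ha := (prodPowSubOne_pos hq d).ne'
    have hc : q ^ (d + 1) - 1 ≠ 0 := (sub_pos.2 (one_lt_pow₀ hq d.succ_ne_zero)).ne'
    rw [prodPowSubOne_succ]
    field_simp
    ring
  calc eulerSeries q (q * x)
      = 1 + ∑' d : ℕ,
          (x ^ (d + 1) / prodPowSubOne q (d + 1) + x * (x ^ d / prodPowSubOne q d)) := by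
        rw [eulerSeries_eq_one_add hq, tsum_congr hterm]
    _ = (1 + ∑' d : ℕ, x ^ (d + 1) / prodPowSubOne q (d + 1)) + x * eulerSeries q x := by
        rw [((summable_nat_add_iff 1).2 hs).tsum_add (hs.mul_left x), tsum_mul_left, add_assoc,
          eulerSeries]
    _ = (1 + x) * eulerSeries q x := by
        rw [← eulerSeries_eq_one_add hq]
        ring

theorem eulerSeries_pow_mul (hq : 1 < q) (x : ℝ) (n : ℕ) :
    eulerSeries q (q ^ n * x) = (∏ k ∈ range n, (1 + q ^ k * x)) * eulerSeries q x := by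
  induction n with
  | zero => simp
  | succ n ih =>
    rw [pow_succ', mul_assoc, eulerSeries_mul_left hq, ih, prod_range_succ]
    ring

theorem eulerSeries_eq_prod_mul_div_pow (hq : 1 < q) (x : ℝ) (N : ℕ) :
    eulerSeries q x = (∏ i ∈ range N, (1 + x / q ^ (i + 1))) * eulerSeries q (x / q ^ N) := by
  induction N with
  | zero => simp
  | succ N ih =>
    have hqN : x / q ^ N = q * (x / q ^ (N + 1)) := by
      field_simp [(zero_lt_one.trans hq).ne']
      ring
    rw [ih, hqN, eulerSeries_mul_left hq, prod_range_succ, mul_assoc]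

theorem continuousOn_eulerSeries (hq : 1 < q) : ContinuousOn (eulerSeries q) (Set.Icc (-1) 1) :=
  continuousOn_tsum (fun d => by fun_prop) (summable_eulerSeries hq 1) fun d x hx => by
    rw [norm_div, norm_pow, one_pow, Real.norm_eq_abs, Real.norm_eq_abs,
      abs_of_pos (prodPowSubOne_pos hq d)]
    exact div_le_div_of_nonneg_right (pow_le_one₀ (abs_nonneg x) (abs_le.2 hx))
      (prodPowSubOne_pos hq d).le

theorem tendsto_eulerSeries_div_pow (hq : 1 < q) (x : ℝ) :
    Tendsto (fun N : ℕ => eulerSeries q (x / q ^ N)) atTop (𝓝 1) := by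
  have hcont : ContinuousAt (eulerSeries q) 0 :=
    (continuousOn_eulerSeries hq).continuousAt (Icc_mem_nhds (by norm_num) (by norm_num))
  rw [← eulerSeries_zero hq]
  exact hcont.tendsto.comp (tendsto_const_nhds.div_atTop (tendsto_pow_atTop_atTop_of_one_lt hq))

theorem hasProd_eulerSeries (hq : 1 < q) (x : ℝ) :
    HasProd (fun i : ℕ => 1 + x / q ^ (i + 1)) (eulerSeries q x) := by
  have hgeom : Summable fun i : ℕ => x / q ^ (i + 1) := by
    refine ((summable_geometric_of_lt_one (inv_nonneg.2 (zero_le_one.trans hq.le))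
      (inv_lt_one_of_one_lt₀ hq)).mul_left (x / q)).congr fun i => ?_
    rw [inv_pow]
    field_simp
    ring
  have hmul := Real.multipliable_one_add_of_summable hgeom
  have hlim := hmul.tendsto_prod_tprod_nat.mul (tendsto_eulerSeries_div_pow hq x)
  simp only [← eulerSeries_eq_prod_mul_div_pow hq, mul_one] at hlim
  rw [tendsto_const_nhds_iff.1 hlim]
  exact hmul.hasProd

end eulerSeries

theorem tprod_one_add_inv_two_pow_eq_eulerSeries (u : ℕ) :
    ∏' i : ℕ, (1 + ((2 : ℝ) ^ (u + i + 1))⁻¹) = eulerSeries 2 ((2 : ℝ) ^ u)⁻¹ := by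
  rw [← (hasProd_eulerSeries one_lt_two _).tprod_eq]
  congr! 2 with i
  rw [add_assoc, pow_add, mul_inv, div_eq_mul_inv]

theorem malleP_eq (u d : ℕ) :
    malleP u d =
      ((2 : ℝ) ^ u)⁻¹ ^ d / prodPowSubOne 2 d / eulerSeries 2 ((2 : ℝ) ^ u)⁻¹ := by
  have ha := (prodPowSubOne_pos one_lt_two d).ne'
  have hE := (eulerSeries_pos one_lt_two (x := ((2 : ℝ) ^ u)⁻¹) (by positivity)).ne'
  rw [malleP, prod_range_pow_sub_pow, tprod_one_add_inv_two_pow_eq_eulerSeries]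
  generalize eulerSeries 2 ((2 : ℝ) ^ u)⁻¹ = E at hE ⊢
  field_simp
  rw [one_div, inv_pow, ← pow_mul, mul_comm u, mul_inv_cancel₀ (by positivity)]

theorem tsum_pow_mul_malleP (u n : ℕ) :
    ∑' d : ℕ, ((2 : ℝ) ^ d) ^ n * malleP u d =
      ∏ k ∈ range n, (1 + (2 : ℝ) ^ k / 2 ^ u) := by
  set y : ℝ := ((2 : ℝ) ^ u)⁻¹
  have hE := (eulerSeries_pos one_lt_two (x := y) (by positivity)).ne'
  have hterm : ∀ d : ℕ, ((2 : ℝ) ^ d) ^ n * malleP u d =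
      (2 ^ n * y) ^ d / prodPowSubOne 2 d / eulerSeries 2 y := by
    intro d
    rw [malleP_eq]
    ring
  rw [tsum_congr hterm, tsum_div_const, ← eulerSeries, eulerSeries_pow_mul one_lt_two,
    mul_div_cancel_right₀ _ hE]
  simp only [y, div_eq_mul_inv]

/-- for every `u ≥ 0`, the `n`-th moment of `|V|` for Malle's
distribution `malleP u` is `∏_{k=0}^{n-1} (1 + 2^{k-u})`; in particular for
`u = 0, n = 1` the average of `|V|` is `2` and for `u = 1, n = 1` it is `3/2`. -/
theorem stmt15 (u n : ℕ) :
    (∑' d : ℕ, ((2 : ℝ) ^ d) ^ n * malleP u d =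
        ∏ k ∈ Finset.range n, (1 + (2 : ℝ) ^ k / 2 ^ u)) ∧
    (∑' d : ℕ, (2 : ℝ) ^ d * malleP 0 d = 2) ∧
    (∑' d : ℕ, (2 : ℝ) ^ d * malleP 1 d = 3 / 2) := by
  refine ⟨tsum_pow_mul_malleP u n, ?_, ?_⟩
  · convert tsum_pow_mul_malleP 0 1 using 1 <;> norm_num
  · convert tsum_pow_mul_malleP 1 1 using 1 <;> norm_num
end

section
/- For pairs of binary cubic forms (F_1, F_2) with F_1 = Σ C(3,i) r_{i+1} x^{3−i}y^i and F_2 = Σ C(3,i) r_{i+5} x^{3−i}y^i, the function A_1(F_1,F_2) = r_1 r_8 − 3 r_2 r_7 + 3 r_3 r_6 − r_4 r_5 is invariant under the simultaneous action of SL_2 × SL_2 (one factor acting on the variables (x,y) of both forms, the other acting linearly on the pair (F_1,F_2)). -/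
open MvPolynomial

/-- The binary cubic form `s₀ x³ + 3 s₁ x² y + 3 s₂ x y² + s₃ y³` (with the binomial
coefficient normalization of coordinates), as a polynomial in the two variables `X 0, X 1`. -/
noncomputable def binCubic (K : Type*) [CommRing K] (s₀ s₁ s₂ s₃ : K) :
    MvPolynomial (Fin 2) K :=
  C s₀ * X 0 ^ 3 + C (3 * s₁) * X 0 ^ 2 * X 1 + C (3 * s₂) * X 0 * X 1 ^ 2 + C s₃ * X 1 ^ 3

/-- The invariant `A₁` of a pair of binary cubic forms with coordinates
`r 0, …, r 7` (so `A₁ = r₁ r₈ - 3 r₂ r₇ + 3 r₃ r₆ - r₄ r₅` in 1-based notation). -/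
def A1 (K : Type*) [CommRing K] (r : Fin 8 → K) : K :=
  r 0 * r 7 - 3 * r 1 * r 6 + 3 * r 2 * r 5 - r 3 * r 4

/-- `A₁` is invariant under the simultaneous action of `SL₂ × SL₂` on
pairs of binary cubic forms: the first `SL₂` factor (matrix `(a b; c d)`, `ad - bc = 1`)
acts by linear substitution on the variables `(x, y)` of both forms, the second
(matrix `(e f; g h)`, `eh - fg = 1`) acts linearly on the pair `(F₁, F₂)`. -/
theorem stmt17 (K : Type*) [Field K] (h2 : (2 : K) ≠ 0) (h3 : (3 : K) ≠ 0)
    (r r' : Fin 8 → K) (a b c d e f g h : K)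
    (had : a * d - b * c = 1) (hef : e * h - f * g = 1)
    (hF1 : binCubic K (r' 0) (r' 1) (r' 2) (r' 3) =
        C e * (aeval ![C a * X 0 + C b * X 1, C c * X 0 + C d * X 1]
            (binCubic K (r 0) (r 1) (r 2) (r 3))) +
          C f * (aeval ![C a * X 0 + C b * X 1, C c * X 0 + C d * X 1]
            (binCubic K (r 4) (r 5) (r 6) (r 7))))
    (hF2 : binCubic K (r' 4) (r' 5) (r' 6) (r' 7) =
        C g * (aeval ![C a * X 0 + C b * X 1, C c * X 0 + C d * X 1]
            (binCubic K (r 0) (r 1) (r 2) (r 3))) +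
          C h * (aeval ![C a * X 0 + C b * X 1, C c * X 0 + C d * X 1]
            (binCubic K (r 4) (r 5) (r 6) (r 7)))) :
    A1 K r' = A1 K r := by
  have h6 : (6 : K) ≠ 0 := by
    intro hh
    apply h3
    have : (6:K) = 2*3 := by norm_num
    rcases mul_eq_zero.mp (this ▸ hh) with h' | h'
    · exact absurd h' h2
    · exact h'
  have E1 := congrArg (eval ![(1:K), 0]) hF1
  have E2 := congrArg (eval ![(0:K), 1]) hF1
  have E3 := congrArg (eval ![(1:K), 1]) hF1
  have E4 := congrArg (eval ![(1:K), -1]) hF1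
  have E5 := congrArg (eval ![(1:K), 0]) hF2
  have E6 := congrArg (eval ![(0:K), 1]) hF2
  have E7 := congrArg (eval ![(1:K), 1]) hF2
  have E8 := congrArg (eval ![(1:K), -1]) hF2
  simp only [binCubic, map_add, map_mul, map_pow, aeval_X, aeval_C, eval_X, eval_C,
    Matrix.cons_val_zero, Matrix.cons_val_one, Matrix.head_cons, algebraMap_eq,
    mul_one, mul_zero, one_mul, zero_mul, add_zero, zero_add, mul_neg, neg_mul,
    one_pow, neg_neg] at E1 E2 E3 E4 E5 E6 E7 E8
  -- transformed coefficients
  set t0 := r 0 * a^3 + 3 * r 1 * a^2*c + 3 * r 2 * a*c^2 + r 3 * c^3 with ht0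
  set t1 := r 0 * a^2*b + r 1 * (a^2*d + 2*a*b*c) + r 2 * (2*a*c*d + b*c^2) + r 3 * c^2*d with ht1
  set t2 := r 0 * a*b^2 + r 1 * (2*a*b*d + b^2*c) + r 2 * (a*d^2 + 2*b*c*d) + r 3 * c*d^2 with ht2
  set t3 := r 0 * b^3 + 3 * r 1 * b^2*d + 3 * r 2 * b*d^2 + r 3 * d^3 with ht3
  set u0 := r 4 * a^3 + 3 * r 5 * a^2*c + 3 * r 6 * a*c^2 + r 7 * c^3 with hu0
  set u1 := r 4 * a^2*b + r 5 * (a^2*d + 2*a*b*c) + r 6 * (2*a*c*d + b*c^2) + r 7 * c^2*d with hu1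
  set u2 := r 4 * a*b^2 + r 5 * (2*a*b*d + b^2*c) + r 6 * (a*d^2 + 2*b*c*d) + r 7 * c*d^2 with hu2
  set u3 := r 4 * b^3 + 3 * r 5 * b^2*d + 3 * r 6 * b*d^2 + r 7 * d^3 with hu3
  have k0 : r' 0 = e * t0 + f * u0 := by rw [ht0, hu0]; linear_combination E1
  have k3 : r' 3 = e * t3 + f * u3 := by rw [ht3, hu3]; linear_combination E2
  have k1 : r' 1 = e * t1 + f * u1 := by
    apply mul_left_cancel₀ h6
    rw [ht1, hu1]; linear_combination E3 - E4 - 2 * E2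
  have k2 : r' 2 = e * t2 + f * u2 := by
    apply mul_left_cancel₀ h6
    rw [ht2, hu2]; linear_combination E3 + E4 - 2 * E1
  have k4 : r' 4 = g * t0 + h * u0 := by rw [ht0, hu0]; linear_combination E5
  have k7 : r' 7 = g * t3 + h * u3 := by rw [ht3, hu3]; linear_combination E6
  have k5 : r' 5 = g * t1 + h * u1 := by
    apply mul_left_cancel₀ h6
    rw [ht1, hu1]; linear_combination E7 - E8 - 2 * E6
  have k6 : r' 6 = g * t2 + h * u2 := by
    apply mul_left_cancel₀ h6
    rw [ht2, hu2]; linear_combination E7 + E8 - 2 * E5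
  simp only [A1]
  rw [k0, k1, k2, k3, k4, k5, k6, k7, ht0, ht1, ht2, ht3, hu0, hu1, hu2, hu3]
  linear_combination
    ((r 0 * r 7 - 3 * r 1 * r 6 + 3 * r 2 * r 5 - r 3 * r 4) * (e*h - f*g) *
      ((a*d - b*c)^2 + (a*d - b*c) + 1)) * had +
    (r 0 * r 7 - 3 * r 1 * r 6 + 3 * r 2 * r 5 - r 3 * r 4) * hef
end
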